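/- Let α = (α_1,…,α_n), β = (β_1,…,β_n) be tuples of real numbers, B = e^{2πiβ_{i₀}} for some i₀, m_B = #{i : e^{2πiβ_i} = B}, and 0 ≤ r < m_B. Then for every w with Re w > 0, g_{B,r}(w + 2πi) = B · Σ_{p=0}^r binom(r,p) · g_{B,p}(w). Consequently, in the basis S_{B_j,r}, the local monodromy of the hypergeometric equation around ∞ (the loop around ∞ being the inverse of the loop around 0) is the inverse transposed block-diagonal matrix (D_{B,m_B}^t)^{−1}. -/

import Mathlib

open Complex Filter Set Finset
open scoped Real

noncomputable section

/-- The balanced gamma product `𝚪_{α,β}(s)`. -/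
def gammaProd {n : ℕ} (α β : Fin n → ℂ) (s : ℂ) : ℂ :=
  (∏ i, (Complex.Gamma (s - α i + 1))⁻¹) * ∏ i, (Complex.Gamma (-s + β i + 1))⁻¹

/-- The local solution `g_{B,r}(w) = Σ_{l≥0} (2πi)^{-r}(d/dt)^r[𝚪_{α,β}(-l+t)e^{(-l+t)w}]|_{t=ν'}`
of the hypergeometric equation at `∞`, in the exponential coordinate `z = e^w`. -/
def gB {n : ℕ} (α β : Fin n → ℝ) (ν' : ℝ) (r : ℕ) (w : ℂ) : ℂ :=
  ∑' l : ℕ, ((2 * (π : ℂ) * Complex.I) ^ r)⁻¹ *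
    iteratedDeriv r
      (fun t : ℂ =>
        gammaProd (fun i => (α i : ℂ)) (fun i => (β i : ℂ)) (-(l : ℂ) + t) *
          Complex.exp ((-(l : ℂ) + t) * w)) (ν' : ℂ)

/-!
Replacing `w` by `w + 2πi` multiplies the `l`-th summand `𝚪(-l + t) e^{(-l + t) w}` by
`e^{2πi t}`, because `e^{-2πi l} = 1`. By the Leibniz rule its `r`-th derivative at `t = ν'` becomes
`e^{2πi ν'} Σ_p C(r,p) (2πi)^{r-p}` times the `p`-th derivatives, and `e^{2πi ν'} = B`. Exchanging
this finite sum with the sum over `l` needs every derivative series to converge. This follows from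
Cauchy's estimate on the unit circle around `ν'`, the factor `e^{-l Re w}`, and the recurrence
`𝚪(s - 1) ∏ (β_i + 1 - s) = ∏ (s - α_i) 𝚪(s)`: on that circle its ratio tends to `1` as `l → ∞`.

With respect to the lexicographic order, `D` is lower triangular with diagonal entries `B_j ≠ 0`,
so it is invertible. The second identity is the first one at `w - 2πi`, solved for `g(w - 2πi)`.
-/

theorem summable_mul_pow_of_eventually_le_mul {d K : ℕ → ℝ} {q : ℝ} (hd : ∀ l, 0 ≤ d l)
    (hK : Tendsto K atTop (nhds 1)) (hdK : ∀ᶠ l in atTop, d (l + 1) ≤ K l * d l)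
    (hq₀ : 0 ≤ q) (hq₁ : q < 1) :
    Summable fun l => d l * q ^ l := by
  obtain ⟨ρ, hqρ, hρ⟩ := exists_between hq₁
  have hKq : ∀ᶠ l in atTop, K l * q < ρ := by
    simpa using (hK.mul_const q).eventually_lt_const (by simpa using hqρ)
  refine summable_of_ratio_norm_eventually_le hρ ?_
  have hdq : ∀ l, 0 ≤ d l * q ^ l := fun l => mul_nonneg (hd l) (pow_nonneg hq₀ l)
  filter_upwards [hdK, hKq] with l hl hlq
  rw [Real.norm_of_nonneg (hdq _), Real.norm_of_nonneg (hdq _)]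
  calc d (l + 1) * q ^ (l + 1) ≤ K l * d l * q ^ (l + 1) := by gcongr
    _ = K l * q * (d l * q ^ l) := by ring
    _ ≤ ρ * (d l * q ^ l) := mul_le_mul_of_nonneg_right hlq.le (hdq l)

section GammaProd

variable {n : ℕ} (α β : Fin n → ℂ)

theorem differentiable_gammaProd : Differentiable ℂ (gammaProd α β) :=
  (Differentiable.fun_finsetProd fun _ _ => differentiable_one_div_Gamma.comp (by fun_prop)).mul
    (Differentiable.fun_finsetProd fun _ _ => differentiable_one_div_Gamma.comp (by fun_prop))

theorem gammaProd_sub_one_mul (s : ℂ) :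
    gammaProd α β (s - 1) * ∏ i, (-s + β i + 1) = (∏ i, (s - α i)) * gammaProd α β s := by
  have hα : ∀ i, (Gamma (s - 1 - α i + 1))⁻¹ = (s - α i) * (Gamma (s - α i + 1))⁻¹ := fun i => by
    rw [← one_div_Gamma_eq_self_mul_one_div_Gamma_add_one]; ring_nf
  have hβ : ∀ i, (Gamma (-(s - 1) + β i + 1))⁻¹ * (-s + β i + 1) = (Gamma (-s + β i + 1))⁻¹ :=
    fun i => by rw [one_div_Gamma_eq_self_mul_one_div_Gamma_add_one (-s + β i + 1)]; ring_nf
  simp only [gammaProd, hα, Finset.prod_mul_distrib, mul_assoc, ← hβ]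

theorem norm_gammaProd_sub_one_le {s : ℂ} {a b : ℝ} (hb : 0 < b) (ha : ∀ i, ‖s - α i‖ ≤ a)
    (hb' : ∀ i, b ≤ ‖-s + β i + 1‖) :
    ‖gammaProd α β (s - 1)‖ ≤ (a / b) ^ n * ‖gammaProd α β s‖ := by
  have hnorm := congrArg norm (gammaProd_sub_one_mul α β s)
  simp only [norm_mul, norm_prod] at hnorm
  have hlow : b ^ n ≤ ∏ i, ‖-s + β i + 1‖ := by
    simpa using Finset.prod_le_prod (s := Finset.univ) (fun i _ => hb.le) (fun i _ => hb' i)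
  have hup : ∏ i, ‖s - α i‖ ≤ a ^ n := by
    simpa using Finset.prod_le_prod (s := Finset.univ) (fun i _ => norm_nonneg _) (fun i _ => ha i)
  rw [div_pow, div_mul_eq_mul_div, le_div_iff₀ (pow_pos hb n)]
  calc ‖gammaProd α β (s - 1)‖ * b ^ n ≤ ‖gammaProd α β (s - 1)‖ * ∏ i, ‖-s + β i + 1‖ := by
        gcongr
    _ = (∏ i, ‖s - α i‖) * ‖gammaProd α β s‖ := hnorm
    _ ≤ a ^ n * ‖gammaProd α β s‖ := by gcongr

end GammaProd

theorem norm_gammaProd_neg_nat_add_sub_one_le {n : ℕ} (α β : Fin n → ℝ) {t : ℂ} {C : ℝ} {l : ℕ}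
    (hα : ∀ i, ‖t‖ + |α i| ≤ C) (hβ : ∀ i, ‖t‖ + |β i| ≤ C) (hl : C < 1 + l) :
    ‖gammaProd (fun i => (α i : ℂ)) (fun i => (β i : ℂ)) (-(l : ℂ) + t - 1)‖ ≤
      ((C + l) / (1 - C + l)) ^ n *
        ‖gammaProd (fun i => (α i : ℂ)) (fun i => (β i : ℂ)) (-(l : ℂ) + t)‖ := by
  refine norm_gammaProd_sub_one_le _ _ (by linarith) (fun i => ?_) (fun i => ?_)
  · calc ‖-(l : ℂ) + t - α i‖ = ‖t - ((l + α i : ℝ) : ℂ)‖ := by push_cast; ring_nf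
      _ ≤ ‖t‖ + |l + α i| := by rw [← Real.norm_eq_abs, ← Complex.norm_real]; exact norm_sub_le _ _
      _ ≤ C + l := by linarith [abs_add_le (l : ℝ) (α i), hα i, Nat.abs_cast (R := ℝ) l]
  · calc 1 - C + l ≤ (-(-(l : ℂ) + t) + β i + 1).re := by
          simp only [neg_add_rev, neg_neg, add_re, neg_re, natCast_re, ofReal_re, one_re]
          linarith [hβ i, re_le_norm t, neg_abs_le (β i)]
      _ ≤ ‖-(-(l : ℂ) + t) + β i + 1‖ := re_le_norm _

theorem norm_exp_neg_nat_add_mul_le (l : ℕ) (t w : ℂ) :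
    ‖exp ((-(l : ℂ) + t) * w)‖ ≤ Real.exp (‖t‖ * ‖w‖) * Real.exp (-w.re) ^ l := by
  rw [norm_exp, ← Real.exp_nat_mul, ← Real.exp_add, Real.exp_le_exp]
  have hre : ((-(l : ℂ) + t) * w).re = (t * w).re + l * -w.re := by
    simp only [mul_re, add_re, neg_re, natCast_re, add_im, neg_im, natCast_im, neg_zero, zero_add]
    ring
  rw [hre, ← norm_mul]
  linarith [re_le_norm (t * w)]

section LocalSolution

variable {n : ℕ} (α β : Fin n → ℝ)

def gBTerm (l : ℕ) (w t : ℂ) : ℂ :=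
  gammaProd (fun i => (α i : ℂ)) (fun i => (β i : ℂ)) (-(l : ℂ) + t) * exp ((-(l : ℂ) + t) * w)

theorem gB_eq_tsum (ν : ℝ) (r : ℕ) (w : ℂ) :
    gB α β ν r w = ∑' l : ℕ, ((2 * π * I) ^ r)⁻¹ * iteratedDeriv r (gBTerm α β l w) ν :=
  rfl

theorem differentiable_gBTerm (l : ℕ) (w : ℂ) : Differentiable ℂ (gBTerm α β l w) :=
  ((differentiable_gammaProd _ _).comp (by fun_prop)).mul (by fun_prop)

def gammaProdSup (x : ℂ) (l : ℕ) : ℝ :=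
  sSup ((fun t => ‖gammaProd (fun i => (α i : ℂ)) (fun i => (β i : ℂ)) (-(l : ℂ) + t)‖) ''
    Metric.sphere x 1)

theorem norm_gammaProd_le_gammaProdSup {x t : ℂ} (ht : t ∈ Metric.sphere x 1) (l : ℕ) :
    ‖gammaProd (fun i => (α i : ℂ)) (fun i => (β i : ℂ)) (-(l : ℂ) + t)‖ ≤
      gammaProdSup α β x l :=
  le_csSup ((isCompact_sphere x 1).bddAbove_image
    ((differentiable_gammaProd _ _).comp (by fun_prop)).continuous.norm.continuousOn)
    (mem_image_of_mem _ ht)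

theorem gammaProdSup_nonneg (x : ℂ) (l : ℕ) : 0 ≤ gammaProdSup α β x l :=
  (norm_nonneg _).trans (norm_gammaProd_le_gammaProdSup α β (by simp : x + 1 ∈ _) l)

theorem exists_eventually_gammaProdSup_succ_le (x : ℂ) : ∃ C : ℝ, ∀ᶠ l : ℕ in atTop,
    gammaProdSup α β x (l + 1) ≤ ((C + l) / (1 - C + l)) ^ n * gammaProdSup α β x l := by
  have hS : ∀ t ∈ Metric.sphere x 1, ‖t‖ ≤ ‖x‖ + 1 := fun t ht =>
    norm_le_of_mem_closedBall (Metric.sphere_subset_closedBall ht)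
  set C := ‖x‖ + 1 + ∑ i, (|α i| + |β i|)
  have hle_sum : ∀ i, |α i| + |β i| ≤ ∑ i, (|α i| + |β i|) := fun i =>
    single_le_sum (f := fun i => |α i| + |β i|) (fun i _ => by positivity) (mem_univ i)
  refine ⟨C, ?_⟩
  filter_upwards [eventually_gt_atTop ⌈C⌉₊] with l hl
  have hCl : C < 1 + l := by linarith [Nat.le_ceil C, (Nat.cast_lt (α := ℝ)).mpr hl]
  have hK : 0 ≤ ((C + l) / (1 - C + l)) ^ n :=
    pow_nonneg (div_nonneg (by positivity) (by linarith)) n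
  refine csSup_le ((nonempty_of_mem (by simp : x + 1 ∈ Metric.sphere x 1)).image _) ?_
  rintro _ ⟨t, ht, rfl⟩
  calc ‖gammaProd (fun i => (α i : ℂ)) (fun i => (β i : ℂ)) (-((l + 1 : ℕ) : ℂ) + t)‖
      = ‖gammaProd (fun i => (α i : ℂ)) (fun i => (β i : ℂ)) (-(l : ℂ) + t - 1)‖ := by
        push_cast; ring_nf
    _ ≤ ((C + l) / (1 - C + l)) ^ n *
          ‖gammaProd (fun i => (α i : ℂ)) (fun i => (β i : ℂ)) (-(l : ℂ) + t)‖ :=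
        norm_gammaProd_neg_nat_add_sub_one_le α β
          (fun i => by linarith [hS t ht, hle_sum i, abs_nonneg (β i)])
          (fun i => by linarith [hS t ht, hle_sum i, abs_nonneg (α i)]) hCl
    _ ≤ ((C + l) / (1 - C + l)) ^ n * gammaProdSup α β x l :=
        mul_le_mul_of_nonneg_left (norm_gammaProd_le_gammaProdSup α β ht l) hK

theorem summable_gammaProdSup_mul_pow (x : ℂ) {q : ℝ} (hq₀ : 0 ≤ q) (hq₁ : q < 1) :
    Summable fun l => gammaProdSup α β x l * q ^ l := by
  obtain ⟨C, hC⟩ := exists_eventually_gammaProdSup_succ_le α β x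
  refine summable_mul_pow_of_eventually_le_mul (gammaProdSup_nonneg α β x) ?_ hC hq₀ hq₁
  simpa using (tendsto_add_mul_div_add_mul_atTop_nhds C (1 - C) (1 : ℝ) one_ne_zero).pow n

theorem norm_gBTerm_le {x t : ℂ} (ht : t ∈ Metric.sphere x 1) (l : ℕ) (w : ℂ) :
    ‖gBTerm α β l w t‖ ≤
      Real.exp ((‖x‖ + 1) * ‖w‖) * (gammaProdSup α β x l * Real.exp (-w.re) ^ l) := by
  rw [gBTerm, norm_mul]
  calc _ ≤ gammaProdSup α β x l * (Real.exp (‖t‖ * ‖w‖) * Real.exp (-w.re) ^ l) :=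
        mul_le_mul (norm_gammaProd_le_gammaProdSup α β ht l) (norm_exp_neg_nat_add_mul_le l t w)
          (norm_nonneg _) (gammaProdSup_nonneg α β x l)
    _ ≤ gammaProdSup α β x l * (Real.exp ((‖x‖ + 1) * ‖w‖) * Real.exp (-w.re) ^ l) := by
        gcongr
        exacts [gammaProdSup_nonneg α β x l,
          norm_le_of_mem_closedBall (Metric.sphere_subset_closedBall ht)]
    _ = _ := by ring

theorem summable_iteratedDeriv_gBTerm (p : ℕ) (x : ℂ) {w : ℂ} (hw : 0 < w.re) :
    Summable fun l : ℕ => iteratedDeriv p (gBTerm α β l w) x := by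
  have hsum := summable_gammaProdSup_mul_pow α β x (Real.exp_pos (-w.re)).le
    (Real.exp_lt_one_iff.mpr (neg_lt_zero.mpr hw))
  refine .of_norm_bounded (hsum.mul_left (p.factorial * Real.exp ((‖x‖ + 1) * ‖w‖))) fun l => ?_
  simpa [mul_assoc] using norm_iteratedDeriv_le_of_forall_mem_sphere_norm_le p one_pos
    (differentiable_gBTerm α β l w).diffContOnCl fun t ht => norm_gBTerm_le α β ht l w

theorem gBTerm_add_two_pi_I (l : ℕ) (w : ℂ) :
    gBTerm α β l (w + 2 * π * I) = fun t => gBTerm α β l w t * exp (2 * π * I * t) := by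
  funext t
  have hexponent : (-(l : ℂ) + t) * (w + 2 * π * I) =
      (-(l : ℂ) + t) * w + 2 * π * I * t + ((-l : ℤ) : ℂ) * (2 * π * I) := by push_cast; ring
  rw [gBTerm, gBTerm, hexponent, exp_add, exp_add, exp_int_mul_two_pi_mul_I, mul_one]
  ring

theorem iteratedDeriv_mul_cexp_const_mul {f : ℂ → ℂ} (hf : Differentiable ℂ f) (c x : ℂ) (r : ℕ) :
    iteratedDeriv r (fun t => f t * exp (c * t)) x =
      exp (c * x) * ∑ p ∈ range (r + 1), r.choose p * c ^ (r - p) * iteratedDeriv p f x := by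
  rw [iteratedDeriv_fun_mul hf.contDiff.contDiffAt (by fun_prop), mul_sum]
  simp only [iteratedDeriv_cexp_const_mul]
  exact sum_congr rfl fun p _ => by ring

theorem gB_add_two_pi_I (ν : ℝ) (r : ℕ) {w : ℂ} (hw : 0 < w.re) :
    gB α β ν r (w + 2 * π * I) =
      exp (2 * π * I * ν) * ∑ p ∈ range (r + 1), (r.choose p : ℂ) * gB α β ν p w := by
  have hc : (2 * π * I : ℂ) ≠ 0 := by simp [Real.pi_ne_zero]
  have hterm : ∀ l : ℕ, ((2 * π * I) ^ r)⁻¹ * iteratedDeriv r (gBTerm α β l (w + 2 * π * I)) ν =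
      ∑ p ∈ range (r + 1), exp (2 * π * I * ν) * r.choose p *
        (((2 * π * I) ^ p)⁻¹ * iteratedDeriv p (gBTerm α β l w) ν) := fun l => by
    rw [gBTerm_add_two_pi_I, iteratedDeriv_mul_cexp_const_mul (differentiable_gBTerm α β l w),
      mul_left_comm, mul_sum, mul_sum]
    refine Finset.sum_congr rfl fun p hp => ?_
    rw [pow_sub₀ _ hc (mem_range_succ_iff.mp hp)]
    field_simp
  rw [gB_eq_tsum, tsum_congr hterm, Summable.tsum_finsetSum fun p _ =>
      ((summable_iteratedDeriv_gBTerm α β p ν hw).mul_left _).mul_left _, mul_sum]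
  exact Finset.sum_congr rfl fun p _ => by rw [tsum_mul_left, mul_assoc, ← gB_eq_tsum]

end LocalSolution

namespace Matrix

variable {ι R : Type*} (m : ι → ℕ) (B : ι → R)

def binomialBlock [DecidableEq ι] [CommSemiring R] : Matrix (Σ j, Fin (m j)) (Σ j, Fin (m j)) R :=
  of fun p q => if p.1 = q.1 ∧ (q.2 : ℕ) ≤ p.2 then (p.2 : ℕ).choose q.2 * B p.1 else 0

theorem det_binomialBlock [Fintype ι] [LinearOrder ι] [CommRing R] :
    (binomialBlock m B).det = ∏ p : Σ j, Fin (m j), B p.1 := by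
  have hlower : (binomialBlock m B).submatrix ofLex ofLex |>.IsLowerTriangular := by
    intro p q hlt
    rw [OrderDual.toDual_lt_toDual] at hlt
    obtain ⟨⟨j, a⟩, rfl⟩ := toLex.surjective p
    obtain ⟨⟨k, b⟩, rfl⟩ := toLex.surjective q
    rw [submatrix_apply, binomialBlock, of_apply, if_neg]
    rintro ⟨rfl, hba⟩
    rcases Sigma.Lex.lt_def.mp hlt with h | ⟨_, h⟩
    · exact lt_irrefl _ h
    · exact not_le.mpr h hba
  rw [← det_submatrix_equiv_self ofLex, det_of_isLowerTriangular _ hlower]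
  exact Fintype.prod_equiv ofLex _ _ fun p => by simp [binomialBlock]

theorem sum_binomialBlock_mul [Fintype ι] [DecidableEq ι] [CommSemiring R]
    (p : Σ j, Fin (m j)) (f : ι → ℕ → R) :
    ∑ q, binomialBlock m B p q * f q.1 q.2 =
      B p.1 * ∑ k ∈ range (p.2 + 1), ((p.2 : ℕ).choose k : R) * f p.1 k := by
  rw [Fintype.sum_sigma, sum_eq_single p.1 (fun j _ hj => sum_eq_zero fun k _ => by
    simp [binomialBlock, Ne.symm hj]) (by simp)]
  simp only [binomialBlock, of_apply, true_and, ite_mul, zero_mul]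
  rw [Fin.sum_univ_eq_sum_range
      (fun k => if k ≤ (p.2 : ℕ) then ((p.2 : ℕ).choose k : R) * B p.1 * f p.1 k else 0),
    ← sum_filter, mul_sum]
  refine sum_congr ?_ fun k _ => by ring
  ext k
  simp only [mem_filter, Finset.mem_range]
  omega

end Matrix

theorem monodromy_at_infinity_general (n nB : ℕ) (α β : Fin n → ℝ)
    (B : Fin nB → ℂ)
    (m : Fin nB → ℕ)
    (ν' : Fin nB → ℝ)
    (hν₁ : ∀ j, ∃ i, β i = ν' j ∧ Complex.exp (2 * (π : ℂ) * Complex.I * (β i : ℂ)) = B j)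
    (D : Matrix (Σ j : Fin nB, Fin (m j)) (Σ j : Fin nB, Fin (m j)) ℂ)
    (hD : ∀ p q : Σ j : Fin nB, Fin (m j),
      D p q = if p.1 = q.1 ∧ (q.2 : ℕ) ≤ (p.2 : ℕ)
        then (Nat.choose (p.2 : ℕ) (q.2 : ℕ) : ℂ) * B p.1 else 0) :
    (∀ j : Fin nB, ∀ r : ℕ, r < m j → ∀ w : ℂ, 0 < w.re →
      gB α β (ν' j) r (w + 2 * (π : ℂ) * Complex.I) =
        B j * ∑ p ∈ Finset.range (r + 1), (Nat.choose r p : ℂ) * gB α β (ν' j) p w) ∧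
    (∀ p : Σ j : Fin nB, Fin (m j), ∀ w : ℂ, 0 < w.re →
      gB α β (ν' p.1) (p.2 : ℕ) (w - 2 * (π : ℂ) * Complex.I) =
        ∑ q : Σ j : Fin nB, Fin (m j), D⁻¹ p q * gB α β (ν' q.1) (q.2 : ℕ) w) := by
  have hB : ∀ j, exp (2 * π * I * ν' j) = B j := fun j => by
    obtain ⟨i, hi, hBi⟩ := hν₁ j
    rwa [hi] at hBi
  have hshift : ∀ j r w, 0 < w.re → gB α β (ν' j) r (w + 2 * π * I) =
      B j * ∑ p ∈ range (r + 1), (r.choose p : ℂ) * gB α β (ν' j) p w := fun j r w hw => by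
    rw [gB_add_two_pi_I α β (ν' j) r hw, hB]
  refine ⟨fun j r _ w hw => hshift j r w hw, fun p w hw => ?_⟩
  obtain rfl : D = Matrix.binomialBlock m B := Matrix.ext hD
  have hdet : IsUnit (Matrix.binomialBlock m B).det := by
    rw [Matrix.det_binomialBlock]
    exact (prod_ne_zero_iff.mpr fun q _ => hB q.1 ▸ exp_ne_zero _).isUnit
  have hmonodromy : (fun q : Σ j, Fin (m j) => gB α β (ν' q.1) q.2 w) =
      (Matrix.binomialBlock m B).mulVec fun q => gB α β (ν' q.1) q.2 (w - 2 * π * I) := by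
    funext q
    rw [Matrix.mulVec, dotProduct, Matrix.sum_binomialBlock_mul m B q
      fun j k => gB α β (ν' j) k (w - 2 * π * I), ← hshift _ _ _ (by simpa using hw),
      sub_add_cancel]
  have hinverse := congrFun (congrArg (Matrix.binomialBlock m B)⁻¹.mulVec hmonodromy) p
  rw [Matrix.mulVec_mulVec, Matrix.nonsing_inv_mul _ hdet, Matrix.one_mulVec] at hinverse
  exact hinverse.symm

/-- For real tuples `α, β`, the local solutions `g_{Bⱼ,r}` at `∞` transform
under `w ↦ w + 2πi` by `g_{Bⱼ,r}(w + 2πi) = Bⱼ · Σ_{p=0}^r C(r,p) g_{Bⱼ,p}(w)`; consequently,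
in the basis `S_{Bⱼ,r}` the local monodromy around `∞` — the loop around `∞` being the inverse
`w ↦ w - 2πi` of the loop around `0` — is the inverse transposed block-diagonal matrix
`(D_{B,m_B}^t)⁻¹`, i.e. `g_p(w - 2πi) = Σ_q (D⁻¹)_{p,q} g_q(w)`. -/
theorem monodromy_at_infinity (n nB : ℕ) (α β : Fin n → ℝ)
    (B : Fin nB → ℂ) (hinj : Function.Injective B)
    (hval : ∀ j, ∃ i, Complex.exp (2 * (π : ℂ) * Complex.I * (β i : ℂ)) = B j)
    (hsurj : ∀ i, ∃ j, Complex.exp (2 * (π : ℂ) * Complex.I * (β i : ℂ)) = B j)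
    (m : Fin nB → ℕ)
    (hm : ∀ j, m j =
      Nat.card {i : Fin n // Complex.exp (2 * (π : ℂ) * Complex.I * (β i : ℂ)) = B j})
    (hn : ∑ j, m j = n)
    (ν' : Fin nB → ℝ)
    (hν₁ : ∀ j, ∃ i, β i = ν' j ∧ Complex.exp (2 * (π : ℂ) * Complex.I * (β i : ℂ)) = B j)
    (hν₂ : ∀ j i, Complex.exp (2 * (π : ℂ) * Complex.I * (β i : ℂ)) = B j → β i ≤ ν' j)
    (D : Matrix (Σ j : Fin nB, Fin (m j)) (Σ j : Fin nB, Fin (m j)) ℂ)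
    (hD : ∀ p q : Σ j : Fin nB, Fin (m j),
      D p q = if p.1 = q.1 ∧ (q.2 : ℕ) ≤ (p.2 : ℕ)
        then (Nat.choose (p.2 : ℕ) (q.2 : ℕ) : ℂ) * B p.1 else 0) :
    (∀ j : Fin nB, ∀ r : ℕ, r < m j → ∀ w : ℂ, 0 < w.re →
      gB α β (ν' j) r (w + 2 * (π : ℂ) * Complex.I) =
        B j * ∑ p ∈ Finset.range (r + 1), (Nat.choose r p : ℂ) * gB α β (ν' j) p w) ∧
    (∀ p : Σ j : Fin nB, Fin (m j), ∀ w : ℂ, 0 < w.re →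
      gB α β (ν' p.1) (p.2 : ℕ) (w - 2 * (π : ℂ) * Complex.I) =
        ∑ q : Σ j : Fin nB, Fin (m j), D⁻¹ p q * gB α β (ν' q.1) (q.2 : ℕ) w) :=
  monodromy_at_infinity_general n nB α β B m ν' hν₁ D hD
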